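/- arXiv:1707.06712 — 10 statements merged into one kernel-verified Lean document; each statement's English description precedes it below -/
import Mathlib

section
/- For every integer k ≥ 1 and every pair of positive integers x with real y ≥ 0 satisfying x·y ≥ r, the inequality a_k x + b_k y ≥ 1 holds, where a_k = 1/(2k-1) and b_k = k(k-1)/(r(2k-1)). -/
/-! Since `y ≥ r / x`, it suffices that `x + k(k-1)/x ≥ 2k - 1`, i.e. that
`(x - k)(x - (k - 1)) ≥ 0`; this holds because no integer lies strictly between `k - 1` and `k`. -/

theorem Int.sub_mul_sub_sub_one_nonneg (x k : ℤ) : 0 ≤ (x - k) * (x - (k - 1)) := by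
  rcases le_or_gt k x with hle | hlt
  · nlinarith
  · nlinarith

theorem Int.two_mul_sub_one_le_add_div (x k : ℤ) (hx : 0 < x) :
    2 * (k : ℝ) - 1 ≤ x + k * (k - 1) / x := by
  have hx' : (0 : ℝ) < x := by exact_mod_cast hx
  have key : (0 : ℝ) ≤ (x - k) * (x - (k - 1)) := by
    exact_mod_cast Int.sub_mul_sub_sub_one_nonneg x k
  have hsplit : (x : ℝ) + k * (k - 1) / x - (2 * k - 1) = (x - k) * (x - (k - 1)) / x := by
    field_simp
    ring
  rw [← sub_nonneg, hsplit]
  exact div_nonneg key hx'.le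

theorem stmt_1_general (r : ℝ) (hr : 0 < r) (k : ℕ) (hk : 1 ≤ k)
    (x : ℕ) (hx : 1 ≤ x) (y : ℝ) (hxy : r ≤ (x : ℝ) * y) :
    1 ≤ (1 / (2 * (k : ℝ) - 1)) * (x : ℝ)
      + ((k : ℝ) * ((k : ℝ) - 1) / (r * (2 * (k : ℝ) - 1))) * y := by
  have hK : (1 : ℝ) ≤ k := by exact_mod_cast hk
  have h2k : (0 : ℝ) < 2 * k - 1 := by linarith
  have hx0 : (0 : ℝ) < x := by exact_mod_cast hx
  have hb : 0 ≤ (k : ℝ) * (k - 1) / (r * (2 * k - 1)) := by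
    have : (0 : ℝ) ≤ k - 1 := by linarith
    positivity
  have hy : r / x ≤ y := by rwa [div_le_iff₀' hx0]
  have hbound := Int.two_mul_sub_one_le_add_div x k (by exact_mod_cast hx)
  push_cast at hbound
  calc 1 ≤ (x + k * (k - 1) / x) / (2 * (k : ℝ) - 1) := by rwa [le_div_iff₀ h2k, one_mul]
    _ = 1 / (2 * k - 1) * x + k * (k - 1) / (r * (2 * k - 1)) * (r / x) := by
      field_simp
    _ ≤ _ := by gcongr

theorem stmt_1 (r : ℝ) (hr : 0 < r) (k : ℕ) (hk : 1 ≤ k)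
    (x : ℕ) (hx : 1 ≤ x) (y : ℝ) (hy : 0 ≤ y) (hxy : r ≤ (x : ℝ) * y) :
    1 ≤ (1 / (2 * (k : ℝ) - 1)) * (x : ℝ)
      + ((k : ℝ) * ((k : ℝ) - 1) / (r * (2 * (k : ℝ) - 1))) * y :=
  stmt_1_general r hr k hk x hx y hxy
end

section
/- Let (x̄, ȳ) be an extreme point of conv(S), where S = {(x,y) ∈ ℤ^n_+ × ℝ^n_+ : Σ_{i=1}^n x_i y_i ≥ r} with r > 0. Then there exists an index t such that x̄_t ȳ_t = r and x̄_i = 0, ȳ_i = 0 for all i ≠ t. -/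
/-!
Every point of `S` violating the conclusion is the midpoint of two other points of `S`, hence not
extreme. If `x ⬝ᵥ y > r`, move `y` to `(1 ± ε) • y`, with `ε` chosen so that the lower point
reaches `x ⬝ᵥ y = r`. If `x i ≠ 0 = y i`, move the integer `x i` by `±1`.
If `x i = 0 ≠ y i`, move `y i` by `± y i`. If `y i` and `y j` are both nonzero, trade mass between
them along a direction orthogonal to `x`, which keeps `x ⬝ᵥ y` fixed.
-/

theorem eq_zero_of_add_mem_of_sub_mem_of_mem_extremePoints {𝕜 E : Type*} [Ring 𝕜] [LinearOrder 𝕜]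
    [IsStrictOrderedRing 𝕜] [Invertible (2 : 𝕜)] [AddCommGroup E] [Module 𝕜 E] {A : Set E}
    {x v : E} (hx : x ∈ A.extremePoints 𝕜) (h₁ : x + v ∈ A) (h₂ : x - v ∈ A) : v = 0 :=
  add_eq_left.mp (hx.2 h₁ h₂ (mem_openSegment_add_sub x v))

def bilinearCover (ι : Type*) [Fintype ι] (r : ℝ) : Set ((ι → ℝ) × (ι → ℝ)) :=
  {p | (∀ i, ∃ m : ℕ, p.1 i = m) ∧ (∀ i, 0 ≤ p.2 i) ∧ r ≤ p.1 ⬝ᵥ p.2}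

namespace bilinearCover

variable {ι : Type*} [Fintype ι] {r : ℝ} {x y : ι → ℝ}

theorem of_mem_extremePoints
    (hp : (x, y) ∈ (convexHull ℝ (bilinearCover ι r)).extremePoints ℝ) :
    (∀ i, ∃ m : ℕ, x i = m) ∧ 0 ≤ y ∧ r ≤ x ⬝ᵥ y :=
  (extremePoints_convexHull_subset hp :)

theorem eq_zero_of_fst_perturb (hp : (x, y) ∈ (convexHull ℝ (bilinearCover ι r)).extremePoints ℝ)
    {d : ι → ℝ} (h₁ : (x + d, y) ∈ bilinearCover ι r) (h₂ : (x - d, y) ∈ bilinearCover ι r) :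
    d = 0 := by
  simpa using eq_zero_of_add_mem_of_sub_mem_of_mem_extremePoints (v := (d, 0)) hp
    (subset_convexHull ℝ _ (by simpa using h₁)) (subset_convexHull ℝ _ (by simpa using h₂))

theorem eq_zero_of_snd_perturb (hp : (x, y) ∈ (convexHull ℝ (bilinearCover ι r)).extremePoints ℝ)
    {d : ι → ℝ} (h₁ : (x, y + d) ∈ bilinearCover ι r) (h₂ : (x, y - d) ∈ bilinearCover ι r) :
    d = 0 := by
  simpa using eq_zero_of_add_mem_of_sub_mem_of_mem_extremePoints (v := (0, d)) hp
    (subset_convexHull ℝ _ (by simpa using h₁)) (subset_convexHull ℝ _ (by simpa using h₂))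

theorem dotProduct_eq (hr : 0 ≤ r)
    (hp : (x, y) ∈ (convexHull ℝ (bilinearCover ι r)).extremePoints ℝ) : x ⬝ᵥ y = r := by
  obtain ⟨hx, hy, hle⟩ := of_mem_extremePoints hp
  by_contra hne
  have hlt : r < x ⬝ᵥ y := hle.lt_of_ne (Ne.symm hne)
  have hpos : 0 < x ⬝ᵥ y := hr.trans_lt hlt
  set c := r / (x ⬝ᵥ y)
  have hc₀ : 0 ≤ c := div_nonneg hr hpos.le
  have hc₁ : c < 1 := (div_lt_one hpos).mpr hlt
  have h₁ : (x, y + (1 - c) • y) ∈ bilinearCover ι r := by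
    refine ⟨hx, add_nonneg hy (smul_nonneg (by linarith) hy), ?_⟩
    rw [dotProduct_add, dotProduct_smul, smul_eq_mul]
    nlinarith
  have h₂ : (x, y - (1 - c) • y) ∈ bilinearCover ι r := by
    rw [sub_smul, one_smul, sub_sub_cancel]
    refine ⟨hx, smul_nonneg hc₀ hy, ?_⟩
    rw [dotProduct_smul, smul_eq_mul, div_mul_cancel₀ r hpos.ne']
  have hd := eq_zero_of_snd_perturb hp h₁ h₂
  rw [smul_eq_zero] at hd
  rcases hd with hc | rfl
  · linarith
  · simp at hpos

variable [DecidableEq ι]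

theorem snd_ne_zero_of_fst_ne_zero
    (hp : (x, y) ∈ (convexHull ℝ (bilinearCover ι r)).extremePoints ℝ) {i : ι} (hxi : x i ≠ 0) :
    y i ≠ 0 := by
  intro hyi
  obtain ⟨hx, hy, hle⟩ := of_mem_extremePoints hp
  have h₁ : (x + Pi.single i 1, y) ∈ bilinearCover ι r := by
    refine ⟨fun k => ?_, hy, by simpa [add_dotProduct, hyi] using hle⟩
    obtain ⟨m, hm⟩ := hx k
    rcases eq_or_ne k i with rfl | hk
    · exact ⟨m + 1, by simp [hm]⟩
    · exact ⟨m, by simp [hk, hm]⟩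
  have h₂ : (x - Pi.single i 1, y) ∈ bilinearCover ι r := by
    refine ⟨fun k => ?_, hy, by simpa [sub_dotProduct, hyi] using hle⟩
    obtain ⟨m, hm⟩ := hx k
    rcases eq_or_ne k i with rfl | hk
    · obtain ⟨m, rfl⟩ : ∃ m', m = m' + 1 :=
        Nat.exists_eq_add_one.mpr (Nat.pos_of_ne_zero (by rintro rfl; simp_all))
      exact ⟨m, by simp [hm]⟩
    · exact ⟨m, by simp [hk, hm]⟩
  simpa using eq_zero_of_fst_perturb hp h₁ h₂

theorem fst_ne_zero_of_snd_ne_zero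
    (hp : (x, y) ∈ (convexHull ℝ (bilinearCover ι r)).extremePoints ℝ) {i : ι} (hyi : y i ≠ 0) :
    x i ≠ 0 := by
  intro hxi
  obtain ⟨hx, hy, hle⟩ := of_mem_extremePoints hp
  have h₁ : (x, y + Pi.single i (y i)) ∈ bilinearCover ι r :=
    ⟨hx, add_nonneg hy (Pi.single_nonneg.mpr (hy i)), by simpa [dotProduct_add, hxi] using hle⟩
  have h₂ : (x, y - Pi.single i (y i)) ∈ bilinearCover ι r := by
    refine ⟨hx, fun k => ?_, by simpa [dotProduct_sub, hxi] using hle⟩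
    rcases eq_or_ne k i with rfl | hk
    · simp
    · simpa [hk] using hy k
  exact hyi (by simpa using eq_zero_of_snd_perturb hp h₁ h₂)

theorem snd_eq_zero_of_ne
    (hp : (x, y) ∈ (convexHull ℝ (bilinearCover ι r)).extremePoints ℝ) {i j : ι} (hij : i ≠ j)
    (hyj : y j ≠ 0) : y i = 0 := by
  by_contra hyi
  wlog h : x i * y i ≤ x j * y j generalizing i j
  · exact this hij.symm hyi hyj (le_of_not_ge h)
  obtain ⟨hx, hy, hle⟩ := of_mem_extremePoints hp
  have hxj : x j ≠ 0 := fst_ne_zero_of_snd_ne_zero hp hyj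
  have hx₀ : 0 ≤ x := fun k => by obtain ⟨m, hm⟩ := hx k; exact hm ▸ m.cast_nonneg
  have hxj₀ : 0 < x j := (hx₀ j).lt_of_ne' hxj
  -- `d` moves mass `x i * y i` of the product from coordinate `j` to coordinate `i`.
  set d : ι → ℝ := Pi.single i (y i) - Pi.single j (x i * y i / x j)
  have hd : x ⬝ᵥ d = 0 := by
    simp only [d, dotProduct_sub, dotProduct_single]
    field_simp
    ring
  have hjbound : x i * y i / x j ≤ y j := by
    rw [div_le_iff₀ hxj₀]; linarith
  have h₁ : (x, y + d) ∈ bilinearCover ι r := by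
    refine ⟨hx, fun k => ?_, by rwa [dotProduct_add, hd, add_zero]⟩
    rcases eq_or_ne k i with rfl | hki
    · simpa [d, hij] using add_nonneg (hy k) (hy k)
    rcases eq_or_ne k j with rfl | hkj
    · simpa [d, hki] using hjbound
    · simpa [d, hki, hkj] using hy k
  have h₂ : (x, y - d) ∈ bilinearCover ι r := by
    refine ⟨hx, fun k => ?_, by rwa [dotProduct_sub, hd, sub_zero]⟩
    rcases eq_or_ne k i with rfl | hki
    · simp [d, hij]
    rcases eq_or_ne k j with rfl | hkj
    · simpa [d, hki] using add_nonneg (hy k) (div_nonneg (mul_nonneg (hx₀ i) (hy i)) hxj₀.le)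
    · simpa [d, hki, hkj] using hy k
  exact hyi (by simpa [d, hij] using congrFun (eq_zero_of_snd_perturb hp h₁ h₂) i)

end bilinearCover

theorem stmt_2_general (n : ℕ) (r : ℝ) (hr : 0 < r)
    (S : Set ((Fin n → ℝ) × (Fin n → ℝ)))
    (hS : S = {p | (∀ i, ∃ m : ℕ, p.1 i = (m : ℝ)) ∧ (∀ i, 0 ≤ p.2 i) ∧
      r ≤ ∑ i, p.1 i * p.2 i})
    (p : (Fin n → ℝ) × (Fin n → ℝ))
    (hp : p ∈ (convexHull ℝ S).extremePoints ℝ) :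
    ∃ t, p.1 t * p.2 t = r ∧ ∀ i, i ≠ t → p.1 i = 0 ∧ p.2 i = 0 := by
  subst hS
  obtain ⟨x, y⟩ := p
  change (x, y) ∈ (convexHull ℝ (bilinearCover (Fin n) r)).extremePoints ℝ at hp
  have hdot : x ⬝ᵥ y = r := bilinearCover.dotProduct_eq hr.le hp
  obtain ⟨t, -, ht⟩ := Finset.exists_ne_zero_of_sum_ne_zero (hdot.trans_ne hr.ne')
  have hyt : y t ≠ 0 := right_ne_zero_of_mul ht
  have hvanish (i : Fin n) (hi : i ≠ t) : x i = 0 ∧ y i = 0 :=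
    have hyi := bilinearCover.snd_eq_zero_of_ne hp hi hyt
    ⟨by_contra fun hxi => bilinearCover.snd_ne_zero_of_fst_ne_zero hp hxi hyi, hyi⟩
  refine ⟨t, ?_, hvanish⟩
  rw [← hdot, dotProduct, Fintype.sum_eq_single t fun i hi => by simp [(hvanish i hi).2]]

theorem stmt_2 (n : ℕ) (hn : 1 ≤ n) (r : ℝ) (hr : 0 < r)
    (S : Set ((Fin n → ℝ) × (Fin n → ℝ)))
    (hS : S = {p | (∀ i, ∃ m : ℕ, p.1 i = (m : ℝ)) ∧ (∀ i, 0 ≤ p.2 i) ∧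
      r ≤ ∑ i, p.1 i * p.2 i})
    (p : (Fin n → ℝ) × (Fin n → ℝ))
    (hp : p ∈ (convexHull ℝ S).extremePoints ℝ) :
    ∃ t, p.1 t * p.2 t = r ∧ ∀ i, i ≠ t → p.1 i = 0 ∧ p.2 i = 0 :=
  stmt_2_general n r hr S hS p hp
end

section
/- Let S = {(x,y) ∈ ℤ^n_+ × ℝ^n_+ : Σ_i x_i y_i ≥ r} with r > 0, and for i ∈ {1,...,n} let S_i = {(x,y) ∈ S : x_j = 0 and y_j = 0 for all j ≠ i}. Then (x̄,ȳ) is an extreme point of conv(S) if and only if (x̄,ȳ) is an extreme point of conv(S_i) for some i. -/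
/-!
A point of `S` that is extreme in `conv S` cannot be perturbed inside `S` in two opposite
directions. If `x_j y_j = 0`, scaling the `j`-th coordinate pair by `0` and by `2` stays in `S`,
so `x_j = y_j = 0`; if `x_j y_j > 0` and `x_k y_k > 0` with `j ≠ k`, moving mass between `y_j` and
`y_k` keeps `∑ x_i y_i` fixed. Hence an extreme point is supported on a single index `i`, i.e. lies
in `S_i`. Conversely, `S_i` is cut out of `S ⊆ ℝ^{2n}_+` by the nonnegative linear functional
`∑_{j ≠ i} (x_j + y_j)`, so `conv S_i` is a face of `conv S`.
-/

open Matrix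

section ExposedFace

variable {𝕜 E : Type*} [Field 𝕜] [LinearOrder 𝕜] [IsStrictOrderedRing 𝕜] [AddCommGroup E]
  [Module 𝕜 E] {A : Set E}

theorem eq_zero_of_mem_extremePoints_of_add_mem_of_sub_mem {p d : E}
    (hp : p ∈ A.extremePoints 𝕜) (hadd : p + d ∈ A) (hsub : p - d ∈ A) : d = 0 := by
  simpa using hp.2 hadd hsub (mem_openSegment_add_sub p d)

variable {f : E →ₗ[𝕜] 𝕜}

theorem isExtreme_setOf_eq_zero (hf : ∀ a ∈ A, 0 ≤ f a) :
    IsExtreme 𝕜 A {a ∈ A | f a = 0} := by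
  refine ⟨Set.sep_subset _ _, fun x₁ hx₁ x₂ hx₂ _ hx hseg => ⟨hx₁, ?_⟩⟩
  obtain ⟨a, b, ha, hb, -, rfl⟩ := hseg
  have h := hx.2
  simp only [map_add, map_smul, smul_eq_mul] at h
  nlinarith [mul_nonneg ha.le (hf x₁ hx₁), mul_nonneg hb.le (hf x₂ hx₂)]

theorem convexHull_setOf_eq_zero (hf : ∀ a ∈ A, 0 ≤ f a) :
    convexHull 𝕜 {a ∈ A | f a = 0} = {z ∈ convexHull 𝕜 A | f z = 0} := by
  set F := {a ∈ A | f a = 0}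
  have hface : IsExtreme 𝕜 (convexHull 𝕜 A) {z ∈ convexHull 𝕜 A | f z = 0} :=
    isExtreme_setOf_eq_zero (convexHull_min hf (convex_halfSpace_ge f.isLinear 0))
  have hF : F ⊆ {z ∈ convexHull 𝕜 A | f z = 0} := fun a ha => ⟨subset_convexHull 𝕜 A ha.1, ha.2⟩
  refine (convexHull_min hF
    ((convex_convexHull 𝕜 A).inter (convex_hyperplane f.isLinear 0))).antisymm ?_
  suffices convexHull 𝕜 A ⊆ {z ∈ convexHull 𝕜 A | f z = 0 → z ∈ convexHull 𝕜 F} from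
    fun z hz => (this hz.1).2 hz.2
  refine convexHull_min
    (fun a ha => ⟨subset_convexHull 𝕜 A ha, fun h => subset_convexHull 𝕜 F ⟨ha, h⟩⟩) ?_
  -- Convex because, by `hface`, both ends of an open segment through a zero of `f` are zeros of `f`.
  refine convex_iff_openSegment_subset.2 fun x hx y hy z hz => ?_
  have hzC : z ∈ convexHull 𝕜 A := (convex_convexHull 𝕜 A).openSegment_subset hx.1 hy.1 hz
  refine ⟨hzC, fun h => (convex_convexHull 𝕜 F).openSegment_subset (hx.2 ?_) (hy.2 ?_) hz⟩
  · exact (hface.left_mem_of_mem_openSegment hx.1 hy.1 ⟨hzC, h⟩ hz).2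
  · exact (hface.right_mem_of_mem_openSegment hx.1 hy.1 ⟨hzC, h⟩ hz).2

theorem isExtreme_convexHull_setOf_eq_zero (hf : ∀ a ∈ A, 0 ≤ f a) :
    IsExtreme 𝕜 (convexHull 𝕜 A) (convexHull 𝕜 {a ∈ A | f a = 0}) := by
  rw [convexHull_setOf_eq_zero hf]
  exact isExtreme_setOf_eq_zero (convexHull_min hf (convex_halfSpace_ge f.isLinear 0))

end ExposedFace

section OrthogonalSubset

variable {ι : Type*}

def orthogonalSubset (S : Set ((ι → ℝ) × (ι → ℝ))) (i : ι) : Set ((ι → ℝ) × (ι → ℝ)) :=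
  {p ∈ S | ∀ j, j ≠ i → p.1 j = 0 ∧ p.2 j = 0}

variable [Fintype ι] [DecidableEq ι] {S : Set ((ι → ℝ) × (ι → ℝ))}

theorem exists_nonneg_linearMap_orthogonalSubset_eq (hS : ∀ p ∈ S, 0 ≤ p.1 ∧ 0 ≤ p.2) (i : ι) :
    ∃ f : ((ι → ℝ) × (ι → ℝ)) →ₗ[ℝ] ℝ,
      (∀ p ∈ S, 0 ≤ f p) ∧ orthogonalSubset S i = {p ∈ S | f p = 0} := by
  set f : ((ι → ℝ) × (ι → ℝ)) →ₗ[ℝ] ℝ :=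
    (∑ j ∈ {i}ᶜ, LinearMap.proj j) ∘ₗ (LinearMap.fst ℝ _ _ + LinearMap.snd ℝ _ _)
  have hf : ∀ p, f p = ∑ j ∈ {i}ᶜ, (p.1 j + p.2 j) := fun p => by simp [f]
  refine ⟨f, fun p hp => ?_, ?_⟩
  · exact hf p ▸ Finset.sum_nonneg fun j _ => add_nonneg ((hS p hp).1 j) ((hS p hp).2 j)
  · ext p
    refine and_congr_right fun hp => ?_
    obtain ⟨h₁, h₂⟩ := hS p hp
    simp [hf, Finset.sum_eq_zero_iff_of_nonneg fun j _ => add_nonneg (h₁ j) (h₂ j),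
      add_eq_zero_iff_of_nonneg (h₁ _) (h₂ _)]

theorem isExtreme_convexHull_orthogonalSubset (hS : ∀ p ∈ S, 0 ≤ p.1 ∧ 0 ≤ p.2) (i : ι) :
    IsExtreme ℝ (convexHull ℝ S) (convexHull ℝ (orthogonalSubset S i)) := by
  obtain ⟨f, hf, heq⟩ := exists_nonneg_linearMap_orthogonalSubset_eq hS i
  rw [heq]
  exact isExtreme_convexHull_setOf_eq_zero hf

end OrthogonalSubset

def bilinearCoveringSet (ι : Type*) [Fintype ι] (r : ℝ) : Set ((ι → ℝ) × (ι → ℝ)) :=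
  {p | (∀ i, ∃ m : ℕ, p.1 i = m) ∧ (∀ i, 0 ≤ p.2 i) ∧ r ≤ ∑ i, p.1 i * p.2 i}

namespace bilinearCoveringSet

variable {ι : Type*} [Fintype ι] {r : ℝ} {p : (ι → ℝ) × (ι → ℝ)}

theorem nonneg (hp : p ∈ bilinearCoveringSet ι r) : 0 ≤ p.1 ∧ 0 ≤ p.2 := by
  refine ⟨fun i => ?_, hp.2.1⟩
  obtain ⟨m, hm⟩ := hp.1 i
  exact hm ▸ m.cast_nonneg

theorem add_snd_mem (hp : p ∈ bilinearCoveringSet ι r) {t : ι → ℝ} (ht : ∀ i, 0 ≤ p.2 i + t i)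
    (hdot : p.1 ⬝ᵥ t = 0) : p + (0, t) ∈ bilinearCoveringSet ι r := by
  refine ⟨by simpa using hp.1, ht, ?_⟩
  change r ≤ (p.1 + 0) ⬝ᵥ (p.2 + t)
  rw [add_zero, dotProduct_add, hdot, add_zero]
  exact hp.2.2

variable [DecidableEq ι]

theorem eq_zero_of_mul_eq_zero (hp : p ∈ (convexHull ℝ (bilinearCoveringSet ι r)).extremePoints ℝ)
    {j : ι} (hj : p.1 j * p.2 j = 0) : p.1 j = 0 ∧ p.2 j = 0 := by
  obtain ⟨hx, hy, hr⟩ : p ∈ bilinearCoveringSet ι r := extremePoints_convexHull_subset hp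
  change r ≤ p.1 ⬝ᵥ p.2 at hr
  have hadd : p + (Pi.single j (p.1 j), Pi.single j (p.2 j)) ∈ bilinearCoveringSet ι r := by
    refine ⟨fun i => ?_, fun i => ?_, ?_⟩
    · obtain ⟨m, hm⟩ := hx i
      rcases eq_or_ne i j with rfl | h
      · exact ⟨m + m, by simp [hm]⟩
      · exact ⟨m, by simp [hm, h]⟩
    · rcases eq_or_ne i j with rfl | h
      · simpa using add_nonneg (hy i) (hy i)
      · simpa [h] using hy i
    · change r ≤ (p.1 + _) ⬝ᵥ (p.2 + _)
      simp only [add_dotProduct, dotProduct_add, single_dotProduct, dotProduct_single,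
        Pi.add_apply, Pi.single_eq_same]
      linarith
  have hsub : p - (Pi.single j (p.1 j), Pi.single j (p.2 j)) ∈ bilinearCoveringSet ι r := by
    refine ⟨fun i => ?_, fun i => ?_, ?_⟩
    · obtain ⟨m, hm⟩ := hx i
      rcases eq_or_ne i j with rfl | h
      · exact ⟨0, by simp⟩
      · exact ⟨m, by simp [hm, h]⟩
    · rcases eq_or_ne i j with rfl | h
      · simp
      · simpa [h] using hy i
    · change r ≤ (p.1 - _) ⬝ᵥ (p.2 - _)
      simp only [sub_dotProduct, dotProduct_sub, single_dotProduct, dotProduct_single,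
        Pi.sub_apply, Pi.single_eq_same]
      linarith
  simpa using eq_zero_of_mem_extremePoints_of_add_mem_of_sub_mem hp
    (subset_convexHull ℝ _ hadd) (subset_convexHull ℝ _ hsub)

theorem eq_of_mul_pos (hp : p ∈ (convexHull ℝ (bilinearCoveringSet ι r)).extremePoints ℝ)
    {j k : ι} (hj : 0 < p.1 j * p.2 j) (hk : 0 < p.1 k * p.2 k) : j = k := by
  have hpS : p ∈ bilinearCoveringSet ι r := extremePoints_convexHull_subset hp
  by_contra hjk
  have hxj : 0 < p.1 j := ((nonneg hpS).1 j).lt_of_ne (by rintro h; simp [← h] at hj)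
  have hxk : 0 < p.1 k := ((nonneg hpS).1 k).lt_of_ne (by rintro h; simp [← h] at hk)
  set c := min (p.1 j * p.2 j) (p.1 k * p.2 k)
  have hc : 0 < c := lt_min hj hk
  have hcj : c / p.1 j ≤ p.2 j := (div_le_iff₀' hxj).2 (min_le_left _ _)
  have hck : c / p.1 k ≤ p.2 k := (div_le_iff₀' hxk).2 (min_le_right _ _)
  set t : ι → ℝ := Pi.single j (c / p.1 j) - Pi.single k (c / p.1 k)
  have ht : ∀ i, |t i| ≤ p.2 i := by
    intro i
    rcases eq_or_ne i j with rfl | hij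
    · simpa [t, hjk, abs_of_pos (div_pos hc hxj)] using hcj
    rcases eq_or_ne i k with rfl | hik
    · simpa [t, hij, abs_of_pos (div_pos hc hxk)] using hck
    · simpa [t, hij, hik] using hpS.2.1 i
  have hdot : p.1 ⬝ᵥ t = 0 := by
    simp [t, dotProduct_sub, dotProduct_single, mul_div_cancel₀ _ hxj.ne',
      mul_div_cancel₀ _ hxk.ne']
  have hadd := add_snd_mem hpS (fun i => by linarith [abs_le.1 (ht i)]) hdot
  have hsub := add_snd_mem hpS (t := -t) (fun i => by simp; linarith [abs_le.1 (ht i)])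
    (by rw [dotProduct_neg, hdot, neg_zero])
  have ht0 := eq_zero_of_mem_extremePoints_of_add_mem_of_sub_mem hp (subset_convexHull ℝ _ hadd)
    (by simpa [sub_eq_add_neg] using subset_convexHull ℝ _ hsub)
  have htj := congrFun (congrArg Prod.snd ht0) j
  simp [t, hjk, hc.ne', hxj.ne'] at htj

theorem exists_mem_orthogonalSubset (hr : 0 < r)
    (hp : p ∈ (convexHull ℝ (bilinearCoveringSet ι r)).extremePoints ℝ) :
    ∃ i, p ∈ orthogonalSubset (bilinearCoveringSet ι r) i := by
  have hpS : p ∈ bilinearCoveringSet ι r := extremePoints_convexHull_subset hp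
  obtain ⟨i, -, hi⟩ : ∃ i ∈ Finset.univ, (0 : ℝ) < p.1 i * p.2 i :=
    Finset.exists_lt_of_sum_lt (by simpa using hr.trans_le hpS.2.2)
  refine ⟨i, hpS, fun j hji => eq_zero_of_mul_eq_zero hp ?_⟩
  exact le_antisymm (not_lt.1 fun hj => hji (eq_of_mul_pos hp hj hi))
    (mul_nonneg ((nonneg hpS).1 j) ((nonneg hpS).2 j))

end bilinearCoveringSet

theorem stmt_3_general (n : ℕ) (r : ℝ) (hr : 0 < r)
    (S : Set ((Fin n → ℝ) × (Fin n → ℝ)))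
    (hS : S = {p | (∀ i, ∃ m : ℕ, p.1 i = (m : ℝ)) ∧ (∀ i, 0 ≤ p.2 i) ∧
      r ≤ ∑ i, p.1 i * p.2 i})
    (Si : Fin n → Set ((Fin n → ℝ) × (Fin n → ℝ)))
    (hSi : ∀ i, Si i = {p ∈ S | ∀ j, j ≠ i → p.1 j = 0 ∧ p.2 j = 0})
    (p : (Fin n → ℝ) × (Fin n → ℝ)) :
    p ∈ (convexHull ℝ S).extremePoints ℝ ↔
      ∃ i, p ∈ (convexHull ℝ (Si i)).extremePoints ℝ := by
  obtain rfl : S = bilinearCoveringSet (Fin n) r := hS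
  obtain rfl : Si = orthogonalSubset (bilinearCoveringSet (Fin n) r) := funext hSi
  constructor
  · intro hp
    obtain ⟨i, hi⟩ := bilinearCoveringSet.exists_mem_orthogonalSubset hr hp
    exact ⟨i, inter_extremePoints_subset_extremePoints_of_subset
      (convexHull_mono (Set.sep_subset _ _)) ⟨subset_convexHull ℝ _ hi, hp⟩⟩
  · rintro ⟨i, hp⟩
    exact (isExtreme_convexHull_orthogonalSubset (fun _ => bilinearCoveringSet.nonneg) i)
      |>.extremePoints_subset_extremePoints hp

theorem stmt_3 (n : ℕ) (hn : 1 ≤ n) (r : ℝ) (hr : 0 < r)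
    (S : Set ((Fin n → ℝ) × (Fin n → ℝ)))
    (hS : S = {p | (∀ i, ∃ m : ℕ, p.1 i = (m : ℝ)) ∧ (∀ i, 0 ≤ p.2 i) ∧
      r ≤ ∑ i, p.1 i * p.2 i})
    (Si : Fin n → Set ((Fin n → ℝ) × (Fin n → ℝ)))
    (hSi : ∀ i, Si i = {p ∈ S | ∀ j, j ≠ i → p.1 j = 0 ∧ p.2 j = 0})
    (p : (Fin n → ℝ) × (Fin n → ℝ)) :
    p ∈ (convexHull ℝ S).extremePoints ℝ ↔
      ∃ i, p ∈ (convexHull ℝ (Si i)).extremePoints ℝ :=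
  stmt_3_general n r hr S hS Si hSi p
end

section
/- Every point (x̄, ȳ) that is a midpoint of a nontrivial convex combination argument as follows cannot be extreme: if (x̄,ȳ) ∈ conv(S) has two indices i ≠ j with x̄_i ȳ_i > 0 and x̄_j ȳ_j > 0, then (x̄,ȳ) is not an extreme point of conv(S). -/
/-! Perturb only the `y`-part of `(x̄, ȳ)` along `d = x̄_j e_i - x̄_i e_j`. Since `x̄ ⬝ᵥ d = 0`, the
product `Σ x̄_k y_k` is unchanged, and since `ȳ_i, ȳ_j > 0` the perturbed `y` stays nonnegative for
small steps. So `(x̄, ȳ)` is the midpoint of two distinct points of `S` and cannot be extreme. -/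

open Filter Topology Matrix

theorem notMem_extremePoints_of_eventually_add_smul_mem {E : Type*} [AddCommGroup E]
    [Module ℝ E] {A : Set E} {x v : E} (hv : v ≠ 0)
    (hA : ∀ᶠ s in 𝓝 (0 : ℝ), x + s • v ∈ A) : x ∉ A.extremePoints ℝ := by
  obtain ⟨ε, hε, hball⟩ := Metric.eventually_nhds_iff.1 hA
  have hmem : ∀ s, |s| < ε → x + s • v ∈ A := fun s hs ↦
    hball (by rwa [Real.dist_eq, sub_zero])
  intro hx
  have hmid : x ∈ openSegment ℝ (x + (ε / 2) • v) (x + (-(ε / 2)) • v) :=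
    ⟨1 / 2, 1 / 2, by norm_num, by norm_num, by norm_num, by module⟩
  have hleft := hx.2 (hmem _ (abs_lt.2 ⟨by linarith, by linarith⟩))
    (hmem _ (abs_lt.2 ⟨by linarith, by linarith⟩)) hmid
  exact hv (smul_right_injective E (by positivity : ε / 2 ≠ 0) (by simpa using hleft))

theorem eventually_nonneg_add_smul {ι : Type*} [Finite ι] {y d : ι → ℝ} (hy : 0 ≤ y)
    (hd : ∀ k, d k ≠ 0 → 0 < y k) : ∀ᶠ s in 𝓝 (0 : ℝ), 0 ≤ y + s • d := by
  simp only [Pi.le_def, Pi.add_apply, Pi.smul_apply, smul_eq_mul, Pi.zero_apply]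
  refine eventually_all.2 fun k ↦ ?_
  by_cases hdk : d k = 0
  · simpa [hdk] using hy k
  have hcont : Tendsto (fun s : ℝ ↦ y k + s * d k) (𝓝 0) (𝓝 (y k)) := by
    simpa using (by fun_prop : Continuous fun s : ℝ ↦ y k + s * d k).tendsto 0
  exact (hcont.eventually (lt_mem_nhds (hd k hdk))).mono fun _ ↦ le_of_lt

theorem dotProduct_single_sub_single_eq_zero {ι R : Type*} [Fintype ι] [DecidableEq ι]
    [CommRing R] (x : ι → R) (i j : ι) : x ⬝ᵥ (Pi.single i (x j) - Pi.single j (x i)) = 0 := by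
  rw [dotProduct_sub, dotProduct_single, dotProduct_single, mul_comm, sub_self]

theorem stmt_4_general (n : ℕ) (r : ℝ)
    (S : Set ((Fin n → ℝ) × (Fin n → ℝ)))
    (hS : S = {p | (∀ i, ∃ m : ℕ, p.1 i = (m : ℝ)) ∧ (∀ i, 0 ≤ p.2 i) ∧
      r ≤ ∑ i, p.1 i * p.2 i})
    (p : (Fin n → ℝ) × (Fin n → ℝ))
    (i j : Fin n) (hij : i ≠ j)
    (hi : 0 < p.1 i * p.2 i) (hj : 0 < p.1 j * p.2 j) :
    p ∉ (convexHull ℝ S).extremePoints ℝ := by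
  intro hext
  rw [hS] at hext
  obtain ⟨hx, hy, hsum⟩ := extremePoints_convexHull_subset hext
  set d : Fin n → ℝ := Pi.single i (p.1 j) - Pi.single j (p.1 i)
  have hd_i : d i = p.1 j := by simp [d, hij]
  have hd_supp : ∀ k, d k ≠ 0 → 0 < p.2 k := by
    intro k hk
    obtain rfl | rfl : k = i ∨ k = j := by
      by_contra! h; simp [d, h.1, h.2] at hk
    exacts [(hy k).lt_of_ne' (right_ne_zero_of_mul hi.ne'),
      (hy k).lt_of_ne' (right_ne_zero_of_mul hj.ne')]
  have hv : ((0 : Fin n → ℝ), d) ≠ 0 := fun h ↦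
    left_ne_zero_of_mul hj.ne' (by simpa [hd_i] using congrArg (fun q ↦ q.2 i) h)
  refine notMem_extremePoints_of_eventually_add_smul_mem hv ?_ hext
  filter_upwards [eventually_nonneg_add_smul (fun k ↦ hy k) hd_supp] with s hs
  refine subset_convexHull ℝ _ ⟨by simpa using hx, hs, ?_⟩
  have hdot : ∑ k, p.1 k * d k = 0 := dotProduct_single_sub_single_eq_zero p.1 i j
  simpa [mul_add, Finset.sum_add_distrib, mul_left_comm _ s, ← Finset.mul_sum, hdot] using hsum

theorem stmt_4 (n : ℕ) (hn : 2 ≤ n) (r : ℝ) (hr : 0 < r)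
    (S : Set ((Fin n → ℝ) × (Fin n → ℝ)))
    (hS : S = {p | (∀ i, ∃ m : ℕ, p.1 i = (m : ℝ)) ∧ (∀ i, 0 ≤ p.2 i) ∧
      r ≤ ∑ i, p.1 i * p.2 i})
    (p : (Fin n → ℝ) × (Fin n → ℝ)) (hpS : p ∈ convexHull ℝ S)
    (i j : Fin n) (hij : i ≠ j)
    (hi : 0 < p.1 i * p.2 i) (hj : 0 < p.1 j * p.2 j) :
    p ∉ (convexHull ℝ S).extremePoints ℝ :=
  stmt_4_general n r S hS p i j hij hi hj
end

section
/- Let (x̄, ȳ) be an extreme point of conv(W) where W = {(x,y) ∈ ℤ^n_+ × ℝ^n_+ : Σ_i x_i y_i ≥ r, x ≤ u, Gx ≤ h}. Then there exists an index t with x̄_t ȳ_t = r and ȳ_i = 0 for all i ≠ t. -/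
/-!
Fix the integer part `x = p.1` of an extreme point `p`. Every `(x, y)` with `y ≥ 0` and
`x ⬝ᵥ y ≥ r` lies in `W`, so `p.2` is an extreme point of that fibre. There, any perturbation
`y ± q` staying in the fibre must vanish: scaling `y` by `1 ± δ` forces `x ⬝ᵥ y = r`, moving
weight `y i` on a coordinate with `x i = 0` forces `x i > 0` on the support of `y`, and the
exchange `y ± ((m / x i) eᵢ - (m / x j) eⱼ)`, which keeps `x ⬝ᵥ y`, rules out two support indices.
-/

open Matrix

section ExtremePoints

variable {𝕜 E F : Type*}

theorem eq_zero_of_mem_extremePoints_of_add_mem_of_sub_mem_s6 [Field 𝕜] [LinearOrder 𝕜]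
    [IsStrictOrderedRing 𝕜] [AddCommGroup E] [Module 𝕜 E] {A : Set E} {x v : E}
    (hx : x ∈ A.extremePoints 𝕜) (hadd : x + v ∈ A) (hsub : x - v ∈ A) : v = 0 :=
  add_eq_left.mp (hx.2 hadd hsub (mem_openSegment_add_sub x v))

theorem snd_mem_extremePoints_of_fiber [Semiring 𝕜] [PartialOrder 𝕜] [AddCommMonoid E]
    [AddCommMonoid F] [Module 𝕜 E] [Module 𝕜 F] {A : Set (E × F)} {B : Set F} {p : E × F}
    (hp : p ∈ A.extremePoints 𝕜) (hBA : ∀ y ∈ B, (p.1, y) ∈ A) (hpB : p.2 ∈ B) :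
    p.2 ∈ B.extremePoints 𝕜 := by
  refine ⟨hpB, fun y₁ hy₁ y₂ hy₂ hy ↦ congrArg Prod.snd (hp.2 (hBA y₁ hy₁) (hBA y₂ hy₂) ?_)⟩
  rw [← Prod.image_mk_openSegment_right]
  exact ⟨p.2, hy, rfl⟩

end ExtremePoints

def nonnegSuperlevelSet {ι : Type*} [Fintype ι] (x : ι → ℝ) (r : ℝ) : Set (ι → ℝ) :=
  {y | 0 ≤ y ∧ r ≤ x ⬝ᵥ y}

namespace nonnegSuperlevelSet

variable {ι : Type*} [Fintype ι] {x y : ι → ℝ} {r : ℝ}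

theorem eq_zero_of_dotProduct_eq_zero (hy : y ∈ (nonnegSuperlevelSet x r).extremePoints ℝ)
    {q : ι → ℝ} (hxq : x ⬝ᵥ q = 0) (hqy : ∀ i, |q i| ≤ y i) : q = 0 := by
  obtain ⟨hy0, hyr⟩ := hy.1
  refine eq_zero_of_mem_extremePoints_of_add_mem_of_sub_mem_s6 hy ⟨fun i ↦ ?_, ?_⟩
    ⟨fun i ↦ ?_, ?_⟩
  · simpa [neg_le_iff_add_nonneg'] using neg_le_of_abs_le (hqy i)
  · simpa [dotProduct_add, hxq] using hyr
  · simpa using le_of_abs_le (hqy i)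
  · simpa [dotProduct_sub, hxq] using hyr

theorem dotProduct_eq (hr : 0 < r) (hy : y ∈ (nonnegSuperlevelSet x r).extremePoints ℝ) :
    x ⬝ᵥ y = r := by
  obtain ⟨hy0, hyr⟩ := hy.1
  set s := x ⬝ᵥ y
  have hs : 0 < s := hr.trans_le hyr
  set δ := (s - r) / s
  have hδ0 : 0 ≤ δ := div_nonneg (by linarith) hs.le
  have hδ1 : δ ≤ 1 := (div_le_one hs).mpr (by linarith)
  -- `y` is the midpoint of `(1 + δ) • y` and `(1 - δ) • y`, the latter with `x ⬝ᵥ _ = r`.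
  have hδy : δ • y = 0 := by
    refine eq_zero_of_mem_extremePoints_of_add_mem_of_sub_mem_s6 hy ⟨fun i ↦ ?_, ?_⟩
      ⟨fun i ↦ ?_, ?_⟩
    · simpa using add_nonneg (hy0 i) (mul_nonneg hδ0 (hy0 i))
    · rw [dotProduct_add, dotProduct_smul, smul_eq_mul]
      nlinarith
    · have := mul_le_mul_of_nonneg_right hδ1 (hy0 i)
      simp only [Pi.zero_apply, Pi.sub_apply, Pi.smul_apply, smul_eq_mul]
      linarith
    · rw [dotProduct_sub, dotProduct_smul, smul_eq_mul, div_mul_cancel₀ _ hs.ne']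
      linarith
  rcases smul_eq_zero.mp hδy with hδ | rfl
  · rwa [div_eq_zero_iff, sub_eq_zero, or_iff_left hs.ne'] at hδ
  · simp [s] at hs

variable [DecidableEq ι]

theorem ne_zero_of_pos (hy : y ∈ (nonnegSuperlevelSet x r).extremePoints ℝ) {i : ι}
    (hyi : 0 < y i) : x i ≠ 0 := by
  intro hxi
  have hq : (Pi.single i (y i) : ι → ℝ) = 0 := by
    refine eq_zero_of_dotProduct_eq_zero hy (by simp [hxi]) fun j ↦ ?_
    rcases eq_or_ne j i with rfl | hji
    · simp [abs_of_pos hyi]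
    · simpa [hji] using hy.1.1 j
  simpa [hyi.ne'] using congrFun hq i

theorem eq_of_pos (hx : 0 ≤ x) (hy : y ∈ (nonnegSuperlevelSet x r).extremePoints ℝ) {i j : ι}
    (hyi : 0 < y i) (hyj : 0 < y j) : i = j := by
  by_contra hij
  have hxi : 0 < x i := (hx i).lt_of_ne' (ne_zero_of_pos hy hyi)
  have hxj : 0 < x j := (hx j).lt_of_ne' (ne_zero_of_pos hy hyj)
  set m := min (x i * y i) (x j * y j)
  have hm : 0 < m := lt_min (mul_pos hxi hyi) (mul_pos hxj hyj)
  have hmi : m / x i ≤ y i := (div_le_iff₀' hxi).mpr (min_le_left _ _)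
  have hmj : m / x j ≤ y j := (div_le_iff₀' hxj).mpr (min_le_right _ _)
  have hq : (Pi.single i (m / x i) - Pi.single j (m / x j) : ι → ℝ) = 0 := by
    refine eq_zero_of_dotProduct_eq_zero hy ?_ fun k ↦ ?_
    · simp [dotProduct_sub, mul_div_cancel₀ _ hxi.ne', mul_div_cancel₀ _ hxj.ne']
    rcases eq_or_ne k i with rfl | hki
    · simpa [hij, abs_of_pos (div_pos hm hxi)] using hmi
    rcases eq_or_ne k j with rfl | hkj
    · simpa [hki, abs_of_pos (div_pos hm hxj)] using hmj
    · simpa [hki, hkj] using hy.1.1 k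
  simpa [hij, hm.ne', hxi.ne'] using congrFun hq i

end nonnegSuperlevelSet

theorem exists_eq_single_of_mem_extremePoints_nonnegSuperlevelSet {ι : Type*} [Fintype ι]
    {x y : ι → ℝ} {r : ℝ} (hx : 0 ≤ x) (hr : 0 < r)
    (hy : y ∈ (nonnegSuperlevelSet x r).extremePoints ℝ) :
    ∃ t, x t * y t = r ∧ ∀ i, i ≠ t → y i = 0 := by
  classical
  have hxy := nonnegSuperlevelSet.dotProduct_eq hr hy
  obtain ⟨t, hyt⟩ : ∃ t, 0 < y t := by
    by_contra! hle
    have : y = 0 := funext fun i ↦ (hle i).antisymm (hy.1.1 i)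
    simp [this, hr.ne] at hxy
  have hsupp : ∀ i, i ≠ t → y i = 0 := fun i hit ↦
    ((hy.1.1 i).lt_or_eq.resolve_left fun hyi ↦
      hit (nonnegSuperlevelSet.eq_of_pos hx hy hyi hyt)).symm
  have hy_single : y = Pi.single t (y t) := by
    ext i
    rcases eq_or_ne i t with rfl | hit
    · simp
    · simp [hit, hsupp i hit]
  refine ⟨t, ?_, hsupp⟩
  rw [← hxy, hy_single, dotProduct_single, Pi.single_eq_same]

theorem stmt_6_general (n m : ℕ) (r : ℝ) (hr : 0 < r)
    (u : Fin n → ℕ) (G : Matrix (Fin m) (Fin n) ℚ) (h : Fin m → ℚ)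
    (W : Set ((Fin n → ℝ) × (Fin n → ℝ)))
    (hW : W = {p | (∀ i, ∃ z : ℕ, p.1 i = (z : ℝ)) ∧ (∀ i, 0 ≤ p.2 i) ∧
      (∀ i, p.1 i ≤ (u i : ℝ)) ∧ (∀ k, ∑ i, (G k i : ℝ) * p.1 i ≤ (h k : ℝ)) ∧
      r ≤ ∑ i, p.1 i * p.2 i})
    (p : (Fin n → ℝ) × (Fin n → ℝ))
    (hp : p ∈ (convexHull ℝ W).extremePoints ℝ) :
    ∃ t, p.1 t * p.2 t = r ∧ ∀ i, i ≠ t → p.2 i = 0 := by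
  have hpW : p ∈ W := extremePoints_convexHull_subset hp
  rw [hW] at hpW
  obtain ⟨hint, hy0, hxu, hGx, hsum⟩ := hpW
  have hx0 : 0 ≤ p.1 := fun i ↦ by
    obtain ⟨z, hz⟩ := hint i
    simp [hz]
  have hfibre : p.2 ∈ (nonnegSuperlevelSet p.1 r).extremePoints ℝ :=
    snd_mem_extremePoints_of_fiber hp
      (fun y hy ↦ subset_convexHull ℝ W (hW ▸ ⟨hint, hy.1, hxu, hGx, hy.2⟩)) ⟨hy0, hsum⟩
  exact exists_eq_single_of_mem_extremePoints_nonnegSuperlevelSet hx0 hr hfibre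

theorem stmt_6 (n m : ℕ) (hn : 1 ≤ n) (r : ℝ) (hr : 0 < r)
    (u : Fin n → ℕ) (G : Matrix (Fin m) (Fin n) ℚ) (h : Fin m → ℚ)
    (W : Set ((Fin n → ℝ) × (Fin n → ℝ)))
    (hW : W = {p | (∀ i, ∃ z : ℕ, p.1 i = (z : ℝ)) ∧ (∀ i, 0 ≤ p.2 i) ∧
      (∀ i, p.1 i ≤ (u i : ℝ)) ∧ (∀ k, ∑ i, (G k i : ℝ) * p.1 i ≤ (h k : ℝ)) ∧
      r ≤ ∑ i, p.1 i * p.2 i})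
    (hWne : W.Nonempty)
    (p : (Fin n → ℝ) × (Fin n → ℝ))
    (hp : p ∈ (convexHull ℝ W).extremePoints ℝ) :
    ∃ t, p.1 t * p.2 t = r ∧ ∀ i, i ≠ t → p.2 i = 0 :=
  stmt_6_general n m r hr u G h W hW p hp
end

section
/- Conversely, every point of the form (x̄,ȳ) with x̄_t = p_t ∈ {1,...,u_t}, ȳ_t = r/p_t for some index t, and x̄_j ∈ {0, u_j}, ȳ_j = 0 for all j ≠ t, is an extreme point of conv(S^U). -/
/-!
Each of the linear inequalities `y_j ≥ 0`, `x_j ≥ 0` or `x_j ≤ u_j` (for `j ≠ t`, whichever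
is tight at the point), and the two lifted secant inequalities
`k (k + 1) y_t + r x_t + (k + 1)² (∑ u) ∑_{j ≠ t} y_j ≥ r (2k + 1)` for `k = p_t - 1, p_t`,
is valid on `S^U` and tight at the point. These equations have the point as their only common
solution, and a point of `S` singled out by tight valid inequalities is extreme in `conv S`.
-/

open Finset

section ConvexHull

variable {E : Type*} [AddCommGroup E] [Module ℝ E]

theorem LinearMap.eq_of_isMinOn_of_mem_openSegment {S : Set E} {f : E →ₗ[ℝ] ℝ} {p q q' : E}
    (hf : IsMinOn f S p) (hq : q ∈ convexHull ℝ S) (hq' : q' ∈ convexHull ℝ S)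
    (hp : p ∈ openSegment ℝ q q') : f q = f p := by
  have hull : convexHull ℝ S ⊆ {z | f p ≤ f z} :=
    convexHull_min hf (convex_halfSpace_ge f.isLinear (f p))
  have hfq : f p ≤ f q := hull hq
  have hfq' : f p ≤ f q' := hull hq'
  obtain ⟨a, b, ha, hb, hab, rfl⟩ := hp
  obtain rfl : b = 1 - a := by linarith
  simp only [map_add, map_smul, smul_eq_mul] at hfq hfq' ⊢
  have hle : f q ≤ f q' := by nlinarith
  have hge : f q' ≤ f q := by nlinarith
  rw [le_antisymm hge hle]
  ring

theorem mem_extremePoints_convexHull_of_forall_isMinOn {S : Set E} {p : E} (hp : p ∈ S)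
    (huniq : ∀ z, (∀ f : E →ₗ[ℝ] ℝ, IsMinOn f S p → f z = f p) → z = p) :
    p ∈ (convexHull ℝ S).extremePoints ℝ :=
  ⟨subset_convexHull ℝ S hp, fun _ hq _ hq' hseg =>
    huniq _ fun f hf => f.eq_of_isMinOn_of_mem_openSegment hf hq hq' hseg⟩

end ConvexHull

/-- The secant of the hyperbola `x * y = r` through `x = k` and `x = k + 1` stays below it at
every integer `x = m`, since `(m - k) * (m - k - 1) ≥ 0`; the term in `w` lifts it to points where
the covering needs the contribution `w` of the other products. -/
theorem mixing_le_of_le_natCast_mul_add {r y w : ℝ} {k m : ℕ} (hr : 0 ≤ r) (hy : 0 ≤ y)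
    (hw : 0 ≤ w) (hcover : r ≤ m * y + w) :
    r * (2 * k + 1) ≤ r * m + k * (k + 1) * y + (k + 1) ^ 2 * w := by
  have hk : (0 : ℝ) ≤ k := k.cast_nonneg
  rcases Nat.eq_zero_or_pos m with rfl | hm
  · simp only [Nat.cast_zero, zero_mul, zero_add, mul_zero] at hcover ⊢
    nlinarith [mul_le_mul_of_nonneg_left hcover (sq_nonneg ((k : ℝ) + 1)),
      mul_nonneg hr (sq_nonneg (k : ℝ)),
      mul_nonneg (mul_nonneg hk (by linarith : (0 : ℝ) ≤ k + 1)) hy]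
  · have hm : (1 : ℝ) ≤ m := by exact_mod_cast hm
    have hgap : (0 : ℝ) ≤ (m - k) * (m - k - 1) := by
      rcases le_or_gt m k with h | h
      · have h : (m : ℝ) ≤ k := by exact_mod_cast h
        nlinarith
      · have h : (k : ℝ) + 1 ≤ m := by exact_mod_cast h
        nlinarith
    have hkk : (0 : ℝ) ≤ k * (k + 1) := by positivity
    nlinarith [mul_le_mul_of_nonneg_left hcover hkk, mul_nonneg hr hgap,
      mul_nonneg hw (by nlinarith : (0 : ℝ) ≤ (k + 1) ^ 2 * m - k * (k + 1)),
      mul_nonneg hkk hy]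

def boundedBilinearCoveringSet {n : ℕ} (r : ℝ) (u : Fin n → ℕ) :
    Set ((Fin n → ℝ) × (Fin n → ℝ)) :=
  {p | (∀ i, ∃ m : ℕ, p.1 i = (m : ℝ)) ∧ (∀ i, 0 ≤ p.2 i) ∧
    (∀ i, p.1 i ≤ (u i : ℝ)) ∧ r ≤ ∑ i, p.1 i * p.2 i}

def mixingFunctional {n : ℕ} (t : Fin n) (a b c : ℝ) : (Fin n → ℝ) × (Fin n → ℝ) →ₗ[ℝ] ℝ :=
  (a • LinearMap.proj t).coprod (b • LinearMap.proj t + c • ∑ j ∈ univ.erase t, LinearMap.proj j)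

section BilinearCovering

variable {n : ℕ} {r a b c : ℝ} {u : Fin n → ℕ} {p z : (Fin n → ℝ) × (Fin n → ℝ)} {t j : Fin n}
  {k pt : ℕ}

@[simp]
theorem mixingFunctional_apply :
    mixingFunctional t a b c z = a * z.1 t + b * z.2 t + c * ∑ j ∈ univ.erase t, z.2 j := by
  simp [mixingFunctional, add_assoc]

theorem mixingFunctional_ge (hr : 0 ≤ r) (hz : z ∈ boundedBilinearCoveringSet r u) (k : ℕ) :
    r * (2 * k + 1) ≤ mixingFunctional t r (k * (k + 1)) ((k + 1) ^ 2 * ∑ i, (u i : ℝ)) z := by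
  obtain ⟨hnat, hy, hxu, hcov⟩ := hz
  obtain ⟨m, hm⟩ := hnat t
  have hU : ∀ j, z.1 j ≤ ∑ i, (u i : ℝ) := fun j =>
    (hxu j).trans (single_le_sum (f := fun i => (u i : ℝ)) (fun i _ => by positivity) (mem_univ j))
  have hrest :
      ∑ j ∈ univ.erase t, z.1 j * z.2 j ≤ (∑ i, (u i : ℝ)) * ∑ j ∈ univ.erase t, z.2 j := by
    rw [mul_sum]
    exact sum_le_sum fun j _ => mul_le_mul_of_nonneg_right (hU j) (hy j)
  have hcover : r ≤ m * z.2 t + (∑ i, (u i : ℝ)) * ∑ j ∈ univ.erase t, z.2 j := by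
    rw [← add_sum_erase _ _ (mem_univ t)] at hcov
    rw [← hm]
    linarith
  have hw : 0 ≤ (∑ i, (u i : ℝ)) * ∑ j ∈ univ.erase t, z.2 j :=
    mul_nonneg (sum_nonneg fun i _ => by positivity) (sum_nonneg fun j _ => hy j)
  have := mixing_le_of_le_natCast_mul_add (k := k) hr (hy t) hw hcover
  rw [mixingFunctional_apply, hm]
  linarith

theorem mixingFunctional_apply_eq_of_secant (hpt : pt ≠ 0) (hk : k + 1 = pt ∨ k = pt)
    (hxt : p.1 t = pt) (hyt : p.2 t = r / pt) (hy : ∀ j ≠ t, p.2 j = 0) :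
    mixingFunctional t r (k * (k + 1)) c p = r * (2 * k + 1) := by
  have hpt : (pt : ℝ) ≠ 0 := Nat.cast_ne_zero.2 hpt
  rw [mixingFunctional_apply, sum_eq_zero fun j hj => hy j (ne_of_mem_erase hj), hxt, hyt]
  rcases hk with rfl | rfl
  · push_cast at hpt ⊢
    field_simp
    ring
  · field_simp
    ring

theorem isMinOn_mixingFunctional (hr : 0 ≤ r) (hpt : pt ≠ 0) (hk : k + 1 = pt ∨ k = pt)
    (hxt : p.1 t = pt) (hyt : p.2 t = r / pt) (hy : ∀ j ≠ t, p.2 j = 0) :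
    IsMinOn (mixingFunctional t r (k * (k + 1)) ((k + 1) ^ 2 * ∑ i, (u i : ℝ)))
      (boundedBilinearCoveringSet r u) p := fun _ hz => by
  rw [mixingFunctional_apply_eq_of_secant hpt hk hxt hyt hy]
  exact mixingFunctional_ge hr hz k

theorem isMinOn_snd_apply (hp : p.2 j = 0) :
    IsMinOn (LinearMap.proj j ∘ₗ LinearMap.snd ℝ _ _) (boundedBilinearCoveringSet r u) p :=
  fun _ hz => by simpa [hp] using hz.2.1 j

theorem isMinOn_fst_apply (hp : p.1 j = 0) :
    IsMinOn (LinearMap.proj j ∘ₗ LinearMap.fst ℝ _ _) (boundedBilinearCoveringSet r u) p :=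
  fun _ hz => by
    obtain ⟨m, hm⟩ := hz.1 j
    simp [hp, hm]

theorem isMinOn_neg_fst_apply (hp : p.1 j = u j) :
    IsMinOn (-(LinearMap.proj j ∘ₗ LinearMap.fst ℝ _ _)) (boundedBilinearCoveringSet r u) p :=
  fun _ hz => by simpa [hp] using hz.2.2.1 j

theorem eq_and_eq_of_secant_eq {x y x' y' : ℝ} (hr : r ≠ 0) (hpt : pt ≠ 0)
    (h : ∀ k : ℕ, k + 1 = pt ∨ k = pt → r * x + k * (k + 1) * y = r * x' + k * (k + 1) * y') :
    x = x' ∧ y = y' := by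
  obtain ⟨k, rfl⟩ := Nat.exists_eq_succ_of_ne_zero hpt
  have h₁ := h k (Or.inl rfl)
  have h₂ := h (k + 1) (Or.inr rfl)
  push_cast at h₂
  have hy : y = y' := by
    have : (2 * (k + 1) : ℝ) * (y - y') = 0 := by linear_combination h₂ - h₁
    simpa [sub_eq_zero, (by positivity : (2 * (k + 1) : ℝ) ≠ 0)] using this
  subst hy
  exact ⟨mul_left_cancel₀ hr (by linarith), rfl⟩

theorem mem_boundedBilinearCoveringSet_of_secant (hr : 0 ≤ r) (hpt : pt ≠ 0) (hptu : pt ≤ u t)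
    (hxt : p.1 t = pt) (hyt : p.2 t = r / pt)
    (hrest : ∀ j, j ≠ t → (p.1 j = 0 ∨ p.1 j = u j) ∧ p.2 j = 0) :
    p ∈ boundedBilinearCoveringSet r u := by
  have hpt : (pt : ℝ) ≠ 0 := Nat.cast_ne_zero.2 hpt
  refine ⟨fun i => ?_, fun i => ?_, fun i => ?_, ?_⟩
  · obtain rfl | hi := eq_or_ne i t
    · exact ⟨pt, hxt⟩
    · rcases (hrest i hi).1 with h | h
      exacts [⟨0, by simp [h]⟩, ⟨u i, h⟩]
  · obtain rfl | hi := eq_or_ne i t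
    · rw [hyt]
      positivity
    · exact (hrest i hi).2.ge
  · obtain rfl | hi := eq_or_ne i t
    · rw [hxt]
      exact_mod_cast hptu
    · rcases (hrest i hi).1 with h | h <;> simp [h]
  · rw [sum_eq_single_of_mem t (mem_univ t) fun j _ hj => by rw [(hrest j hj).2, mul_zero],
      hxt, hyt, mul_div_cancel₀ r hpt]

end BilinearCovering

theorem stmt_8_general (n : ℕ) (r : ℝ) (hr : 0 < r)
    (u : Fin n → ℕ)
    (SU : Set ((Fin n → ℝ) × (Fin n → ℝ)))
    (hSU : SU = {p | (∀ i, ∃ m : ℕ, p.1 i = (m : ℝ)) ∧ (∀ i, 0 ≤ p.2 i) ∧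
      (∀ i, p.1 i ≤ (u i : ℝ)) ∧ r ≤ ∑ i, p.1 i * p.2 i})
    (p : (Fin n → ℝ) × (Fin n → ℝ))
    (t : Fin n) (pt : ℕ) (h1 : 1 ≤ pt) (h2 : pt ≤ u t)
    (hxt : p.1 t = (pt : ℝ)) (hyt : p.2 t = r / (pt : ℝ))
    (hrest : ∀ j, j ≠ t → (p.1 j = 0 ∨ p.1 j = (u j : ℝ)) ∧ p.2 j = 0) :
    p ∈ (convexHull ℝ SU).extremePoints ℝ := by
  obtain rfl : SU = boundedBilinearCoveringSet r u := hSU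
  have hpt : pt ≠ 0 := by omega
  refine mem_extremePoints_convexHull_of_forall_isMinOn
    (mem_boundedBilinearCoveringSet_of_secant hr.le hpt h2 hxt hyt hrest) fun z hz => ?_
  have hy : ∀ j ≠ t, z.2 j = p.2 j := fun j hj => hz _ (isMinOn_snd_apply (hrest j hj).2)
  have hx : ∀ j ≠ t, z.1 j = p.1 j := fun j hj => by
    rcases (hrest j hj).1 with h0 | hu
    · exact hz _ (isMinOn_fst_apply h0)
    · simpa using hz _ (isMinOn_neg_fst_apply hu)
  obtain ⟨hxt', hyt'⟩ : z.1 t = p.1 t ∧ z.2 t = p.2 t := by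
    refine eq_and_eq_of_secant_eq hr.ne' hpt fun k hk => ?_
    have := hz _ (isMinOn_mixingFunctional (u := u) hr.le hpt hk hxt hyt
      fun j hj => (hrest j hj).2)
    simp only [mixingFunctional_apply, sum_congr rfl fun j hj => hy j (ne_of_mem_erase hj)] at this
    linarith
  ext j <;> obtain rfl | hj := eq_or_ne j t
  exacts [hxt', hx j hj, hyt', hy j hj]

theorem stmt_8 (n : ℕ) (hn : 1 ≤ n) (r : ℝ) (hr : 0 < r)
    (u : Fin n → ℕ) (hu : ∀ i, 1 ≤ u i)
    (SU : Set ((Fin n → ℝ) × (Fin n → ℝ)))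
    (hSU : SU = {p | (∀ i, ∃ m : ℕ, p.1 i = (m : ℝ)) ∧ (∀ i, 0 ≤ p.2 i) ∧
      (∀ i, p.1 i ≤ (u i : ℝ)) ∧ r ≤ ∑ i, p.1 i * p.2 i})
    (p : (Fin n → ℝ) × (Fin n → ℝ))
    (t : Fin n) (pt : ℕ) (h1 : 1 ≤ pt) (h2 : pt ≤ u t)
    (hxt : p.1 t = (pt : ℝ)) (hyt : p.2 t = r / (pt : ℝ))
    (hrest : ∀ j, j ≠ t → (p.1 j = 0 ∨ p.1 j = (u j : ℝ)) ∧ p.2 j = 0) :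
    p ∈ (convexHull ℝ SU).extremePoints ℝ :=
  stmt_8_general n r hr u SU hSU p t pt h1 h2 hxt hyt hrest
end

section
/- Let x̄ > 0, ȳ > 0, r > 0 and define f(w) = x̄/(2w-1) + ȳ w(w-1)/(r(2w-1)) for real w ≥ 1. If 4 x̄ r > ȳ, then f is strictly convex on [1,∞) and its unique minimizer is w̄ = 1/2 + (1/2)√(4 x̄ r/ȳ − 1). -/
/-!
Since `w (w - 1) = ((2w - 1)^2 - 1) / 4`, in the variable `u = 2w - 1 > 0` the function is
`f = a u + c / u` with `a = ȳ / (4r)` and `c = (4 x̄ r - ȳ) / (4r) > 0`. Strict convexity of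
`u ↦ u⁻¹` on `(0, ∞)` gives strict convexity of `f`, and for `s = √(c / a)` one has
`a u + c / u - (a s + c / s) = a (u - s)^2 / u`, so `u = s`, i.e. `w = w̄`, is the strict minimizer.
-/

open Set

theorem StrictConvexOn.comp_mul_add {s : Set ℝ} {g : ℝ → ℝ} (hg : StrictConvexOn ℝ s g)
    {m : ℝ} (hm : m ≠ 0) (b : ℝ) :
    StrictConvexOn ℝ ((fun w => m * w + b) ⁻¹' s) fun w => g (m * w + b) := by
  have hcomb : ∀ x y θ η : ℝ, θ + η = 1 →
      m * (θ • x + η • y) + b = θ • (m * x + b) + η • (m * y + b) := by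
    intro x y θ η h
    simp only [smul_eq_mul]
    linear_combination b * h.symm
  refine ⟨fun x hx y hy θ η hθ hη h => ?_, fun x hx y hy hxy θ η hθ hη h => ?_⟩
  · simpa only [mem_preimage, hcomb x y θ η h] using hg.1 hx hy hθ hη h
  · simpa only [hcomb x y θ η h] using
      hg.2 hx hy (by simpa [hm] using hxy) hθ hη h

theorem strictConvexOn_mul_add_div (a : ℝ) {c : ℝ} (hc : 0 < c) :
    StrictConvexOn ℝ (Ioi 0) fun u => a * u + c / u := by
  have hinv : StrictConvexOn ℝ (Ioi 0) fun u : ℝ => u⁻¹ := by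
    simpa only [zpow_neg_one] using strictConvexOn_zpow (m := -1) (by decide) (by decide)
  refine ⟨convex_Ioi 0, fun p hp q hq hpq θ η hθ hη h => ?_⟩
  have key := mul_lt_mul_of_pos_left (hinv.2 hp hq hpq hθ hη h) hc
  simp only [smul_eq_mul] at key ⊢
  simp only [div_eq_mul_inv]
  linear_combination key

theorem mul_add_div_sqrt_lt {a c u : ℝ} (ha : 0 < a) (hc : 0 < c) (hu : 0 < u)
    (hne : u ≠ √(c / a)) :
    a * √(c / a) + c / √(c / a) < a * u + c / u := by
  set s := √(c / a)
  have hs : 0 < s := Real.sqrt_pos.mpr (div_pos hc ha)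
  have hcs : c = a * s ^ 2 := by
    rw [Real.sq_sqrt (div_pos hc ha).le]; field_simp
  have hgap : a * u + c / u - (a * s + c / s) = a * (u - s) ^ 2 / u := by
    rw [hcs]; field_simp; ring
  have hgap_pos : 0 < a * (u - s) ^ 2 / u := by
    have hus : u - s ≠ 0 := sub_ne_zero.mpr hne
    positivity
  linarith

theorem stmt_14_general (xb yb r : ℝ) (hy : 0 < yb) (hr : 0 < r)
    (hcond : yb < 4 * xb * r)
    (f : ℝ → ℝ)
    (hf : ∀ w, f w = xb / (2 * w - 1) + yb * w * (w - 1) / (r * (2 * w - 1)))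
    (wbar : ℝ) (hw : wbar = 1 / 2 + Real.sqrt (4 * xb * r / yb - 1) / 2) :
    StrictConvexOn ℝ (Set.Ici 1) f ∧
    (wbar ∈ Set.Ici (1 : ℝ) →
      ∀ w ∈ Set.Ici (1 : ℝ), w ≠ wbar → f wbar < f w) := by
  set a := yb / (4 * r)
  set c := (4 * xb * r - yb) / (4 * r)
  have ha : 0 < a := by positivity
  have hc : 0 < c := div_pos (by linarith) (by positivity)
  -- at `w = 1/2` both sides are `0` because `x / 0 = 0`
  have hfg : f = fun w => a * (2 * w - 1) + c / (2 * w - 1) := by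
    funext w
    rw [hf]
    rcases eq_or_ne (2 * w - 1) 0 with h | h
    · simp [h]
    · simp only [a, c]
      field_simp
      ring
  have hwbar : 2 * wbar - 1 = √(c / a) := by
    have hca : c / a = 4 * xb * r / yb - 1 := by
      simp only [a, c]
      field_simp
    rw [hw, hca]
    ring
  refine ⟨?_, fun _ w hw1 hne => ?_⟩
  · rw [hfg]
    refine ((strictConvexOn_mul_add_div a hc).comp_mul_add two_ne_zero (-1)).subset
      (fun w hw1 => ?_) (convex_Ici 1)
    simp only [mem_preimage, mem_Ioi]
    linarith [mem_Ici.mp hw1]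
  · have hu : 0 < 2 * w - 1 := by linarith [mem_Ici.mp hw1]
    simp only [hfg, hwbar]
    exact mul_add_div_sqrt_lt ha hc hu fun h => hne (by linarith)

theorem stmt_14 (xb yb r : ℝ) (hx : 0 < xb) (hy : 0 < yb) (hr : 0 < r)
    (hcond : yb < 4 * xb * r)
    (f : ℝ → ℝ)
    (hf : ∀ w, f w = xb / (2 * w - 1) + yb * w * (w - 1) / (r * (2 * w - 1)))
    (wbar : ℝ) (hw : wbar = 1 / 2 + Real.sqrt (4 * xb * r / yb - 1) / 2) :
    StrictConvexOn ℝ (Set.Ici 1) f ∧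
    (wbar ∈ Set.Ici (1 : ℝ) →
      ∀ w ∈ Set.Ici (1 : ℝ), w ≠ wbar → f wbar < f w) :=
  stmt_14_general xb yb r hy hr hcond f hf wbar hw
end

section
/- Suppose d ≥ 0 and c > 0 componentwise. Then min over S of c^T x + d^T y equals min over i ∈ {1,...,n} of min over (x_i,y_i) with x_i ∈ ℤ_{≥1}, y_i ≥ 0, x_i y_i ≥ r of c_i x_i + d_i y_i, i.e., the optimal value of the linear objective over S is attained at a point with exactly one nonzero coordinate pair. -/
/-!
Call `V` a lower bound for the single-pair problem of coordinate `i` if `V ≤ cᵢ x + dᵢ y` whenever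
`x ∈ ℤ_{≥1}`, `y ≥ 0` and `x y ≥ r`. If `V` is such a bound for every `i` and `(x, y) ∈ S` has
`s = ∑ xᵢ yᵢ ≥ r`, then each coordinate with `xᵢ yᵢ > 0` can be rescaled to the single pair
`(xᵢ, s / xᵢ)`, which is feasible; this gives `V xᵢ yᵢ ≤ s (cᵢ xᵢ + dᵢ yᵢ)`, and summing over `i`
yields `V ≤ cᵀx + dᵀy`. The single-pair problems attain their minima because for fixed `i` the
optimal cost `cᵢ x + dᵢ r / x` grows to `∞` with `x`.
-/

open Filter Finset

def IsSinglePairLowerBound (a b r V : ℝ) : Prop :=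
  ∀ (x : ℕ) (y : ℝ), 1 ≤ x → 0 ≤ y → r ≤ x * y → V ≤ a * x + b * y

namespace IsSinglePairLowerBound

variable {a b r V : ℝ}

theorem mul_le (ha : 0 ≤ a) (hb : 0 ≤ b) (hV : IsSinglePairLowerBound a b r V)
    {x : ℕ} {y s : ℝ} (hy : 0 ≤ y) (hrs : r ≤ s) (hxys : x * y ≤ s) :
    V * (x * y) ≤ s * (a * x + b * y) := by
  have hxy : 0 ≤ (x : ℝ) * y := mul_nonneg x.cast_nonneg hy
  have hs : 0 ≤ s := hxy.trans hxys
  rcases hxy.eq_or_lt with hxy0 | hxy0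
  · rw [← hxy0, mul_zero]
    positivity
  have hx : (0 : ℝ) < x := pos_of_mul_pos_left hxy0 hy
  have hsingle : V ≤ a * x + b * (s / x) :=
    hV x (s / x) (Nat.cast_pos.mp hx) (by positivity)
      (by rw [mul_div_cancel₀ _ hx.ne']; exact hrs)
  calc V * (x * y) ≤ (a * x + b * (s / x)) * (x * y) := by gcongr
    _ = a * x * (x * y) + s * (b * y) := by field_simp
    _ ≤ a * x * s + s * (b * y) := by gcongr
    _ = s * (a * x + b * y) := by ring

theorem mono {V' : ℝ} (hV : IsSinglePairLowerBound a b r V) (h : V' ≤ V) :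
    IsSinglePairLowerBound a b r V' :=
  fun x y hx hy hxy => h.trans (hV x y hx hy hxy)

end IsSinglePairLowerBound

theorem le_sum_of_isSinglePairLowerBound {ι : Type*} [Fintype ι] {a b : ι → ℝ}
    (ha : ∀ i, 0 ≤ a i) (hb : ∀ i, 0 ≤ b i) {r V : ℝ} (hr : 0 < r)
    (hV : ∀ i, IsSinglePairLowerBound (a i) (b i) r V)
    (x : ι → ℕ) (y : ι → ℝ) (hy : ∀ i, 0 ≤ y i) (hxy : r ≤ ∑ i, (x i : ℝ) * y i) :
    V ≤ ∑ i, (a i * x i + b i * y i) := by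
  set s := ∑ i, (x i : ℝ) * y i
  have hterm : ∀ i, V * (x i * y i) ≤ s * (a i * x i + b i * y i) := fun i =>
    (hV i).mul_le (ha i) (hb i) (hy i) hxy <|
      single_le_sum (fun j _ => mul_nonneg (x j).cast_nonneg (hy j)) (mem_univ i)
  have : V * s ≤ s * ∑ i, (a i * x i + b i * y i) := by
    rw [mul_sum, mul_sum]
    exact sum_le_sum fun i _ => hterm i
  rw [mul_comm] at this
  exact le_of_mul_le_mul_left this (hr.trans_le hxy)

theorem exists_min_mul_add_mul_div {a : ℝ} (ha : 0 < a) (b r : ℝ) :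
    ∃ k : ℕ, 1 ≤ k ∧ ∀ m : ℕ, 1 ≤ m → a * k + b * (r / k) ≤ a * m + b * (r / m) := by
  have hshift : Tendsto (fun m : ℕ => ((m + 1 : ℕ) : ℝ)) atTop atTop :=
    tendsto_natCast_atTop_atTop.comp (tendsto_add_atTop_nat 1)
  have hcost : Tendsto (fun m : ℕ => a * (m + 1 : ℕ) + b * (r / (m + 1 : ℕ))) cofinite atTop := by
    rw [Nat.cofinite_eq_atTop]
    refine (hshift.const_mul_atTop ha).atTop_add (C := b * 0) (Tendsto.const_mul b ?_)
    exact (tendsto_const_div_atTop_nhds_zero_nat r).comp (tendsto_add_atTop_nat 1)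
  obtain ⟨k, hk⟩ := hcost.exists_forall_le
  refine ⟨k + 1, le_add_self, fun m hm => ?_⟩
  obtain ⟨m, rfl⟩ := Nat.exists_eq_add_of_le' hm
  exact hk m

theorem isSinglePairLowerBound_of_forall_le {a b r : ℝ} (hb : 0 ≤ b) {k : ℕ}
    (hk : ∀ m : ℕ, 1 ≤ m → a * k + b * (r / k) ≤ a * m + b * (r / m)) :
    IsSinglePairLowerBound a b r (a * k + b * (r / k)) := by
  intro x y hx1 _ hxy
  have hx : (0 : ℝ) < x := by exact_mod_cast hx1
  have : r / x ≤ y := by rw [div_le_iff₀ hx]; linarith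
  calc a * k + b * (r / k) ≤ a * x + b * (r / x) := hk x hx1
    _ ≤ a * x + b * y := by gcongr

theorem stmt_17 (n : ℕ) (hn : 1 ≤ n) (r : ℝ) (hr : 0 < r)
    (c d : Fin n → ℝ) (hc : ∀ i, 0 < c i) (hd : ∀ i, 0 ≤ d i)
    (S : Set ((Fin n → ℝ) × (Fin n → ℝ)))
    (hS : S = {p | (∀ i, ∃ m : ℕ, p.1 i = (m : ℝ)) ∧ (∀ i, 0 ≤ p.2 i) ∧
      r ≤ ∑ i, p.1 i * p.2 i}) :
    ∃ (t : Fin n) (xt : ℕ) (yt : ℝ), 1 ≤ xt ∧ 0 ≤ yt ∧ r ≤ (xt : ℝ) * yt ∧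
      (fun i => if i = t then (xt : ℝ) else 0, fun i => if i = t then yt else 0) ∈ S ∧
      (∀ q ∈ S, c t * (xt : ℝ) + d t * yt ≤ ∑ i, (c i * q.1 i + d i * q.2 i)) ∧
      (∀ (i : Fin n) (x : ℕ) (y : ℝ), 1 ≤ x → 0 ≤ y → r ≤ (x : ℝ) * y →
        c t * (xt : ℝ) + d t * yt ≤ c i * (x : ℝ) + d i * y) := by
  choose k hk1 hkmin using fun i => exists_min_mul_add_mul_div (hc i) (d i) r
  have : Nonempty (Fin n) := ⟨⟨0, hn⟩⟩
  obtain ⟨t, ht⟩ := Finite.exists_min fun i => c i * k i + d i * (r / k i)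
  have hkt : (0 : ℝ) < k t := by exact_mod_cast hk1 t
  have hbound : ∀ i, IsSinglePairLowerBound (c i) (d i) r (c t * k t + d t * (r / k t)) :=
    fun i => (isSinglePairLowerBound_of_forall_le (hd i) (hkmin i)).mono (ht i)
  have hfeas : r ≤ (k t : ℝ) * (r / k t) := (mul_div_cancel₀ r hkt.ne').ge
  refine ⟨t, k t, r / k t, hk1 t, by positivity, hfeas, ?_, ?_, hbound⟩
  · subst hS
    refine ⟨fun i => ⟨if i = t then k t else 0, by dsimp only; split_ifs <;> simp⟩,
      fun i => by dsimp only; split_ifs <;> positivity, ?_⟩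
    simpa [ite_mul, mul_ite] using hfeas
  · rintro ⟨x, y⟩ hq
    subst hS
    obtain ⟨hx, hy, hxy⟩ := hq
    choose m hm using hx
    obtain rfl : x = fun i => (m i : ℝ) := funext hm
    exact le_sum_of_isSinglePairLowerBound (fun i => (hc i).le) hd hr hbound m y hy hxy
end

section
/- The point ω = (5, 1, 6, 5/6) lies in conv(S) where S = {(x,y) ∈ ℤ²_+ × ℝ²_+ : x₁y₁ + x₂y₂ ≥ 20}, but ω violates the inequality (5 y₁)/20 + (6 y₂)/20 ≥ 1, which is valid for S^U = S ∩ {x₁ ≤ 5, x₂ ≤ 6}; hence conv(S^U) is strictly contained in conv(S) ∩ {x₁ ≤ 5, x₂ ≤ 6}. -/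
/-!
The point `ω` is the midpoint of `x = (10, 0), y = (2, 0)` and `x = (0, 12), y = (0, 5/3)`, both
in `S`, but lies below the hyperplane `5 y₁ + 6 y₂ = 20`. Every point of `S^U` lies above it, since
`x ≤ u` and `y ≥ 0` give `20 ≤ x ⬝ᵥ y ≤ u ⬝ᵥ y`; so this half-space separates `ω` from
`conv(S^U)`, although `ω` lies in `conv(S)` and in the box `x ≤ u`.
-/

open Set Matrix

section

variable {𝕜 E : Type*} [Semiring 𝕜] [PartialOrder 𝕜] [AddCommMonoid E] [Module 𝕜 E]

theorem convexHull_inter_subset_inter_of_convex {s C : Set E} (hC : Convex 𝕜 C) :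
    convexHull 𝕜 (s ∩ C) ⊆ convexHull 𝕜 s ∩ C :=
  subset_inter (convexHull_mono inter_subset_left) (convexHull_min inter_subset_right hC)

theorem convexHull_inter_ssubset_of_separated {s C H : Set E} (hC : Convex 𝕜 C)
    (hH : Convex 𝕜 H) (hsCH : s ∩ C ⊆ H) {ω : E} (hωs : ω ∈ convexHull 𝕜 s) (hωC : ω ∈ C)
    (hωH : ω ∉ H) : convexHull 𝕜 (s ∩ C) ⊂ convexHull 𝕜 s ∩ C :=
  ssubset_of_subset_not_subset (convexHull_inter_subset_inter_of_convex hC)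
    fun h ↦ hωH (convexHull_min hsCH hH (h ⟨hωs, hωC⟩))

end

theorem le_dotProduct_of_le_dotProduct {n R : Type*} [Fintype n] [Semiring R] [PartialOrder R]
    [IsOrderedRing R] {r : R} {x u y : n → R} (h : r ≤ x ⬝ᵥ y) (hxu : x ≤ u) (hy : 0 ≤ y) :
    r ≤ u ⬝ᵥ y :=
  h.trans (dotProduct_le_dotProduct_of_nonneg_right hxu hy)

theorem convex_setOf_fst_apply_le {𝕜 ι F : Type*} [Semiring 𝕜] [PartialOrder 𝕜] [IsOrderedRing 𝕜]
    [AddCommMonoid F] [Module 𝕜 F] (i : ι) (r : 𝕜) :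
    Convex 𝕜 {p : (ι → 𝕜) × F | p.1 i ≤ r} :=
  convex_halfSpace_le ⟨fun _ _ ↦ rfl, fun _ _ ↦ rfl⟩ r

theorem stmt_18
    (S SU : Set ((Fin 2 → ℝ) × (Fin 2 → ℝ)))
    (hS : S = {p | (∀ i, ∃ m : ℕ, p.1 i = (m : ℝ)) ∧ (∀ i, 0 ≤ p.2 i) ∧
      (20 : ℝ) ≤ p.1 0 * p.2 0 + p.1 1 * p.2 1})
    (hSU : SU = {p ∈ S | p.1 0 ≤ 5 ∧ p.1 1 ≤ 6})
    (ω : (Fin 2 → ℝ) × (Fin 2 → ℝ))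
    (hω : ω = (![5, 6], ![1, 5 / 6])) :
    ω ∈ convexHull ℝ S ∧
    (5 * ω.2 0) / 20 + (6 * ω.2 1) / 20 < 1 ∧
    (∀ p ∈ SU, 1 ≤ (5 * p.2 0) / 20 + (6 * p.2 1) / 20) ∧
    convexHull ℝ SU ⊂ convexHull ℝ S ∩ {p | p.1 0 ≤ 5 ∧ p.1 1 ≤ 6} := by
  have hA : ((![10, 0], ![2, 0]) : (Fin 2 → ℝ) × (Fin 2 → ℝ)) ∈ S := by
    norm_num [hS, Fin.forall_fin_two]
    exact ⟨⟨10, by norm_num⟩, 0, by norm_num⟩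
  have hB : ((![0, 12], ![0, 5 / 3]) : (Fin 2 → ℝ) × (Fin 2 → ℝ)) ∈ S := by
    norm_num [hS, Fin.forall_fin_two]
    exact ⟨⟨0, by norm_num⟩, 12, by norm_num⟩
  have hωS : ω ∈ convexHull ℝ S := by
    refine segment_subset_convexHull hA hB ⟨1 / 2, 1 / 2, by norm_num, by norm_num, by norm_num, ?_⟩
    rw [hω]
    ext i <;> fin_cases i <;> norm_num
  have hω_below : (5 * ω.2 0) / 20 + (6 * ω.2 1) / 20 < 1 := by
    rw [hω]; norm_num
  have hvalid : ∀ p ∈ SU, 1 ≤ (5 * p.2 0) / 20 + (6 * p.2 1) / 20 := by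
    intro p hp
    rw [hSU, hS] at hp
    obtain ⟨⟨-, hy, h20⟩, hx₀, hx₁⟩ := hp
    have h : (20 : ℝ) ≤ ![5, 6] ⬝ᵥ p.2 :=
      le_dotProduct_of_le_dotProduct (x := p.1) (by simpa [dotProduct, Fin.sum_univ_two])
        (Fin.forall_fin_two.2 ⟨hx₀, hx₁⟩) hy
    simp [dotProduct, Fin.sum_univ_two] at h
    linarith
  refine ⟨hωS, hω_below, hvalid, ?_⟩
  have hhalf : Convex ℝ {p : (Fin 2 → ℝ) × (Fin 2 → ℝ) | 1 ≤ 5 * p.2 0 / 20 + 6 * p.2 1 / 20} :=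
    convex_halfSpace_ge ⟨fun p q ↦ by simp only [Prod.snd_add, Pi.add_apply]; ring,
      fun c p ↦ by simp only [Prod.smul_snd, Pi.smul_apply, smul_eq_mul]; ring⟩ 1
  subst hSU
  rw [← sep_mem_eq]
  exact convexHull_inter_ssubset_of_separated
    ((convex_setOf_fst_apply_le 0 5).inter (convex_setOf_fst_apply_le 1 6)) hhalf hvalid hωS
    (by rw [hω]; exact ⟨by norm_num, by norm_num⟩) hω_below.not_ge
end

section
/- For any index set Q ⊆ {1,...,n} and any choice k_i ∈ {1,...,u_i} for i ∉ Q, the inequality Σ_{i∈Q} (u_i y_i)/r + Σ_{i∉Q} (a_{k_i} x_i + b_{k_i} y_i) ≥ 1 is valid for S^U, where a_k = 1/(2k-1), b_k = k(k-1)/(r(2k-1)). -/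
/-!
Put `t i = x i * y i / r`, so that `1 ≤ ∑ i, t i` on `S^U`. Truncation `t ↦ min 1 t` is subadditive
on `[0, ∞)`, hence `1 ≤ ∑ i, min 1 (t i)`, and it suffices to bound each `min 1 (t i)` by the
`i`-th term of the inequality. For `i ∈ Q` this is `t i ≤ u i * y i / r`. For `i ∉ Q` it is the
inequality `min 1 (m z) ≤ (m + k (k - 1) z) / (2k - 1)` for integers `m ≥ 0`, `k ≥ 1` and real
`z ≥ 0`, which comes from `(m - k) (m - k + 1) ≥ 0`, a product of two consecutive integers.
-/

open Finset

lemma Int.mul_add_one_nonneg (a : ℤ) : 0 ≤ a * (a + 1) := by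
  rcases le_or_gt 0 a with ha | ha <;> nlinarith

lemma min_one_add_le {a b : ℝ} (ha : 0 ≤ a) (hb : 0 ≤ b) :
    min 1 (a + b) ≤ min 1 a + min 1 b := by
  simp only [min_def]
  split_ifs <;> linarith

lemma min_one_sum_le {ι : Type*} (s : Finset ι) (t : ι → ℝ) (ht : ∀ i ∈ s, 0 ≤ t i) :
    min 1 (∑ i ∈ s, t i) ≤ ∑ i ∈ s, min 1 (t i) :=
  le_sum_of_subadditive_on_pred (min 1) (0 ≤ ·) (by simp) (fun _ _ => min_one_add_le)
    (fun _ _ => add_nonneg) t ht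

lemma min_one_mul_le_div (m k : ℕ) (hk : 1 ≤ k) {z : ℝ} (hz : 0 ≤ z) :
    min 1 (m * z) ≤ (m + k * (k - 1) * z) / (2 * k - 1) := by
  have hk' : (1 : ℝ) ≤ k := by exact_mod_cast hk
  have hm : (0 : ℝ) ≤ m := m.cast_nonneg
  have hconsec : (0 : ℝ) ≤ (m - k) * (m - k + 1) := by
    exact_mod_cast Int.mul_add_one_nonneg ((m : ℤ) - k)
  rw [le_div_iff₀ (by linarith)]
  rcases le_total (m * z) 1 with hmz | hmz
  · rw [min_eq_right hmz]
    nlinarith [mul_nonneg hz hconsec, mul_nonneg hm (sub_nonneg.2 hmz)]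
  · rw [min_eq_left hmz]
    have hm_pos : (0 : ℝ) < m := pos_of_mul_pos_left (by linarith) hz
    have hkk : (0 : ℝ) ≤ k * (k - 1) := mul_nonneg (by linarith) (by linarith)
    suffices h : (2 * k - 1) * m ≤ (m + k * (k - 1) * z) * m by nlinarith
    nlinarith [mul_nonneg hkk (sub_nonneg.2 hmz)]

lemma min_one_le_of_coeff (r : ℝ) (hr : 0 < r) (m k : ℕ) (hk : 1 ≤ k) {y : ℝ} (hy : 0 ≤ y) :
    min 1 (m * y / r) ≤
      1 / (2 * (k : ℝ) - 1) * m + (k : ℝ) * ((k : ℝ) - 1) / (r * (2 * (k : ℝ) - 1)) * y := by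
  have h2k : (2 * (k : ℝ) - 1) ≠ 0 := by
    have : (1 : ℝ) ≤ k := by exact_mod_cast hk
    linarith
  convert min_one_mul_le_div m k hk (div_nonneg hy hr.le) using 1
  · rw [mul_div_assoc]
  · field_simp

theorem stmt_19_general (n : ℕ) (r : ℝ) (hr : 0 < r)
    (u : Fin n → ℕ)
    (SU : Set ((Fin n → ℝ) × (Fin n → ℝ)))
    (hSU : SU = {p | (∀ i, ∃ m : ℕ, p.1 i = (m : ℝ)) ∧ (∀ i, 0 ≤ p.2 i) ∧
      (∀ i, p.1 i ≤ (u i : ℝ)) ∧ r ≤ ∑ i, p.1 i * p.2 i})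
    (Q : Finset (Fin n)) (k : Fin n → ℕ)
    (hk : ∀ i ∉ Q, 1 ≤ k i ∧ k i ≤ u i)
    (p : (Fin n → ℝ) × (Fin n → ℝ)) (hp : p ∈ SU) :
    1 ≤ ∑ i ∈ Q, (u i : ℝ) * p.2 i / r
      + ∑ i ∈ Qᶜ, ((1 / (2 * (k i : ℝ) - 1)) * p.1 i
          + ((k i : ℝ) * ((k i : ℝ) - 1) / (r * (2 * (k i : ℝ) - 1))) * p.2 i) := by
  subst hSU
  obtain ⟨hx, hy, hxu, hsum⟩ := hp
  choose m hm using hx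
  set t : Fin n → ℝ := fun i => p.1 i * p.2 i / r
  have ht : ∀ i ∈ univ, 0 ≤ t i := fun i _ => by
    simp only [t, hm]
    exact div_nonneg (mul_nonneg (m i).cast_nonneg (hy i)) hr.le
  have hQ : ∀ i ∈ Q, min 1 (t i) ≤ u i * p.2 i / r := fun i _ =>
    (min_le_right _ _).trans (by simp only [t]; gcongr; exacts [hy i, hxu i])
  have hQc : ∀ i ∈ Qᶜ, min 1 (t i) ≤ 1 / (2 * (k i : ℝ) - 1) * p.1 i
      + (k i : ℝ) * ((k i : ℝ) - 1) / (r * (2 * (k i : ℝ) - 1)) * p.2 i := fun i hi => by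
    simp only [t, hm]
    exact min_one_le_of_coeff r hr (m i) (k i) (hk i (mem_compl.1 hi)).1 (hy i)
  have h_one : 1 ≤ ∑ i, t i := by
    rwa [← sum_div, le_div_iff₀ hr, one_mul]
  calc (1 : ℝ) = min 1 (∑ i, t i) := (min_eq_left h_one).symm
    _ ≤ ∑ i, min 1 (t i) := min_one_sum_le _ _ ht
    _ = ∑ i ∈ Q, min 1 (t i) + ∑ i ∈ Qᶜ, min 1 (t i) := (sum_add_sum_compl Q _).symm
    _ ≤ _ := add_le_add (sum_le_sum hQ) (sum_le_sum hQc)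

theorem stmt_19 (n : ℕ) (hn : 1 ≤ n) (r : ℝ) (hr : 0 < r)
    (u : Fin n → ℕ) (hu : ∀ i, 1 ≤ u i)
    (SU : Set ((Fin n → ℝ) × (Fin n → ℝ)))
    (hSU : SU = {p | (∀ i, ∃ m : ℕ, p.1 i = (m : ℝ)) ∧ (∀ i, 0 ≤ p.2 i) ∧
      (∀ i, p.1 i ≤ (u i : ℝ)) ∧ r ≤ ∑ i, p.1 i * p.2 i})
    (Q : Finset (Fin n)) (k : Fin n → ℕ)
    (hk : ∀ i ∉ Q, 1 ≤ k i ∧ k i ≤ u i)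
    (p : (Fin n → ℝ) × (Fin n → ℝ)) (hp : p ∈ SU) :
    1 ≤ ∑ i ∈ Q, (u i : ℝ) * p.2 i / r
      + ∑ i ∈ Qᶜ, ((1 / (2 * (k i : ℝ) - 1)) * p.1 i
          + ((k i : ℝ) * ((k i : ℝ) - 1) / (r * (2 * (k i : ℝ) - 1))) * p.2 i) :=
  stmt_19_general n r hr u SU hSU Q k hk p hp
end
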